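/- arXiv:2206.00920 — 2 statements merged into one kernel-verified Lean document; each statement's English description precedes it below -/
import Mathlib

section
/- Let F : ℝ^d → ℝ be differentiable with L-Lipschitz gradient and let μ be a probability measure on ℝ^d with smooth positive density such that ∫ ‖∇log(dμ/dπ)‖² dμ < ∞, where π ∝ exp(-F). Then ∫ ‖∇F‖² dμ ≤ ∫ ‖∇log(dμ/dπ)‖² dμ + 2dL. -/
open MeasureTheory Real
open scoped ENNReal NNReal

set_option maxHeartbeats 1000000

namespace SecondMomentAux

variable {d : ℕ}
local notation "E" => EuclideanSpace ℝ (Fin d)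

lemma translate_eq (p q : E → ℝ) (w : E) :
    (∫ x, p x * q (x + w)) = ∫ x, p (x - w) * q x := by
  have h := integral_add_right_eq_self (μ := (volume : Measure E))
      (fun y => p (y - w) * q y) w
  simpa using h

lemma dir_ibp {L : ℝ} (hL : 0 ≤ L)
    (p ρ q : E → ℝ) (v : E)
    (hp_cont : Continuous p)
    (hp_lip : ∀ (x : E) (t : ℝ), |p (x + t • v) - p x| ≤ L * |t|)
    (hρ : ContDiff ℝ 1 ρ) (hρ0 : ∀ x, 0 ≤ ρ x)
    (hq : ∀ x, q x = fderiv ℝ ρ x v)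
    (hρ_int : Integrable ρ)
    (hpρ_int : Integrable (fun x => p x * ρ x))
    (hq_int : Integrable q)
    (hpq_int : Integrable (fun x => p x * q x)) :
    -(L * ∫ x, ρ x) ≤ ∫ x, p x * q x := by
  classical
  have hρc : Continuous ρ := hρ.continuous
  have hqc : Continuous q := by
    have h1 : Continuous (fderiv ℝ ρ) := hρ.continuous_fderiv one_ne_zero
    have : Continuous fun x => fderiv ℝ ρ x v := h1.clm_apply continuous_const
    simpa [funext hq] using this
  -- convenient: Lipschitz-type estimate for p along v with general base points
  have hp_lip' : ∀ (x : E) (s t : ℝ), |p (x + s • v) - p (x + t • v)| ≤ L * |s - t| := by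
    intro x s t
    have := hp_lip (x + t • v) (s - t)
    have e : x + t • v + (s - t) • v = x + s • v := by
      rw [add_assoc, ← add_smul]; ring_nf
    rwa [e] at this
  set Q : ℝ := ∫ x, |q x| with hQ
  have hQ0 : 0 ≤ Q := integral_nonneg fun x => abs_nonneg _
  have habs_int : Integrable (fun x => |q x|) := hq_int.abs
  have hpshift : ∀ (x : E) (s : ℝ), |p (x - s • v)| ≤ |p x| + L * |s| := by
    intro x s
    have h2 := hp_lip' x (-s) 0
    have e : x + (-s) • v = x - s • v := by module
    have e0 : x + (0:ℝ) • v = x := by simp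
    rw [e, e0] at h2
    simp only [sub_zero] at h2
    have := abs_sub_abs_le_abs_sub (p (x - s • v)) (p x)
    have habs : |(-s : ℝ)| = |s| := abs_neg s
    nlinarith [abs_nonneg s]
  have hshift_int : ∀ s : ℝ, Integrable (fun x => p (x - s • v) * q x) := by
    intro s
    refine Integrable.mono' (g := fun x => |p x * q x| + L * |s| * |q x|)
      (hpq_int.abs.add (habs_int.const_mul (L * |s|)))
      ((hp_cont.comp (continuous_id.sub continuous_const)).mul hqc).aestronglyMeasurable
      (Filter.Eventually.of_forall fun x => ?_)
    show ‖p (x - s • v) * q x‖ ≤ |p x * q x| + L * |s| * |q x|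
    rw [Real.norm_eq_abs, abs_mul, abs_mul]
    have := hpshift x s
    nlinarith [abs_nonneg (q x), abs_nonneg (p x)]
  set ψ : ℝ → ℝ := fun s => ∫ x, p (x - s • v) * q x with hψdef
  have hψ0 : ψ 0 = ∫ x, p x * q x := by
    simp only [hψdef, zero_smul, sub_zero]
  have hplipgen : ∀ (x : E) (s t : ℝ), |p (x - s • v) - p (x - t • v)| ≤ L * |s - t| := by
    intro x s t
    have h2 := hp_lip' x (-s) (-t)
    have e1 : x + (-s) • v = x - s • v := by module
    have e2 : x + (-t) • v = x - t • v := by module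
    rw [e1, e2] at h2
    have e3 : |(-s) - (-t)| = |s - t| := by rw [← abs_neg]; ring_nf
    rwa [e3] at h2
  have hψub : ∀ s : ℝ, 0 ≤ s → ψ s ≤ (∫ x, p x * q x) + L * s * Q := by
    intro s hs
    have hmono : ∀ x : E, p (x - s • v) * q x ≤ p x * q x + L * s * |q x| := by
      intro x
      have h2 := hplipgen x s 0
      simp only [zero_smul, sub_zero, sub_zero] at h2
      rw [abs_of_nonneg hs] at h2
      have habs := abs_le.1 h2
      have := neg_abs_le (q x)
      have := le_abs_self (q x)
      nlinarith [abs_nonneg (q x), neg_abs_le (p (x - s • v) - p x), le_abs_self (p (x - s • v) - p x)]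
    calc ψ s ≤ ∫ x, (p x * q x + L * s * |q x|) :=
          integral_mono (hshift_int s) (hpq_int.add (habs_int.const_mul _)) hmono
      _ = (∫ x, p x * q x) + L * s * Q := by
          rw [integral_add hpq_int (habs_int.const_mul _), integral_const_mul]
  have hψlip : ∀ s t : ℝ, |ψ s - ψ t| ≤ L * Q * |s - t| := by
    intro s t
    have hdiff_int : Integrable (fun x => (p (x - s • v) - p (x - t • v)) * q x) := by
      have := (hshift_int s).sub (hshift_int t)
      exact this.congr (Filter.Eventually.of_forall fun x => by simp only [Pi.sub_apply]; ring)
    have heq : ψ s - ψ t = ∫ x, (p (x - s • v) - p (x - t • v)) * q x := by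
      rw [hψdef]
      simp only
      rw [← integral_sub (hshift_int s) (hshift_int t)]
      congr 1; ext x; ring
    rw [heq]
    have h1 : |∫ x, (p (x - s • v) - p (x - t • v)) * q x|
        ≤ ∫ x, |p (x - s • v) - p (x - t • v)| * |q x| := by
      have := norm_integral_le_integral_norm (μ := (volume : Measure E))
        (fun x => (p (x - s • v) - p (x - t • v)) * q x)
      simpa [Real.norm_eq_abs] using this
    have h2 : (∫ x, |p (x - s • v) - p (x - t • v)| * |q x|)
        ≤ ∫ x, (L * |s - t|) * |q x| := by
      refine integral_mono ?_ (habs_int.const_mul _) fun x => ?_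
      · simpa [abs_mul] using hdiff_int.abs
      · exact mul_le_mul_of_nonneg_right (hplipgen x s t) (abs_nonneg _)
    have h3 : (∫ x, (L * |s - t|) * |q x|) = L * Q * |s - t| := by
      rw [integral_const_mul]; ring
    linarith
  have hψcont : Continuous ψ := by
    have hLQ : (0:ℝ) ≤ L * Q := mul_nonneg hL hQ0
    refine LipschitzWith.continuous (K := (L * Q).toNNReal) ?_
    refine LipschitzWith.of_dist_le_mul fun s t => ?_
    rw [Real.dist_eq, Real.dist_eq]
    calc |ψ s - ψ t| ≤ L * Q * |s - t| := hψlip s t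
      _ = ((L * Q).toNNReal : ℝ) * |s - t| := by rw [Real.coe_toNNReal _ hLQ]
  have hpρshift_int : ∀ s : ℝ, Integrable (fun x => p x * ρ (x + s • v)) := by
    intro s
    refine Integrable.mono' (g := fun x => |p (x + s • v) * ρ (x + s • v)| + (L * |s|) * ρ (x + s • v))
      ((hpρ_int.abs.comp_add_right _).add ((hρ_int.comp_add_right _).const_mul _))
      (hp_cont.mul (hρc.comp (continuous_id.add continuous_const))).aestronglyMeasurable
      (Filter.Eventually.of_forall fun x => ?_)
    have h1 : |p x| ≤ |p (x + s • v)| + L * |s| := by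
      have h2 := hpshift (x + s • v) s
      have e : x + s • v - s • v = x := by module
      rw [e] at h2
      linarith
    have hρnn := hρ0 (x + s • v)
    show ‖p x * ρ (x + s • v)‖ ≤ |p (x + s • v) * ρ (x + s • v)| + L * |s| * ρ (x + s • v)
    rw [Real.norm_eq_abs, abs_mul, abs_of_nonneg hρnn, abs_mul, abs_of_nonneg hρnn]
    nlinarith
  have key3 : ∀ h : ℝ, 0 < h → -(L * h * ∫ x, ρ x) ≤ ∫ x, p x * (ρ (x + h • v) - ρ x) := by
    intro h hh
    have hsplit : (∫ x, p x * (ρ (x + h • v) - ρ x))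
        = (∫ x, p x * ρ (x + h • v)) - ∫ x, p x * ρ x := by
      rw [← integral_sub (hpρshift_int h) hpρ_int]; congr 1; ext x; ring
    have htr : (∫ x, p x * ρ (x + h • v)) = ∫ x, p (x - h • v) * ρ x :=
      translate_eq p ρ (h • v)
    have hlow : (∫ x, p x * ρ x) - L * h * (∫ x, ρ x) ≤ ∫ x, p (x - h • v) * ρ x := by
      have hint1 : Integrable (fun x => p x * ρ x - (L * h) * ρ x) :=
        hpρ_int.sub (hρ_int.const_mul _)
      have hint2 : Integrable (fun x => p (x - h • v) * ρ x) := by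
        refine Integrable.mono' (g := fun x => |p x * ρ x| + (L * |h|) * ρ x)
          (hpρ_int.abs.add (hρ_int.const_mul _))
          ((hp_cont.comp (continuous_id.sub continuous_const)).mul hρc).aestronglyMeasurable
          (Filter.Eventually.of_forall fun x => ?_)
        have h1 := hpshift x h
        have hρnn := hρ0 x
        show ‖p (x - h • v) * ρ x‖ ≤ |p x * ρ x| + L * |h| * ρ x
        rw [Real.norm_eq_abs, abs_mul, abs_of_nonneg hρnn, abs_mul, abs_of_nonneg hρnn]
        nlinarith
      have hpt : ∀ x : E, p x * ρ x - (L * h) * ρ x ≤ p (x - h • v) * ρ x := by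
        intro x
        have h2 := hplipgen x h 0
        simp only [zero_smul, sub_zero] at h2
        rw [abs_of_pos hh] at h2
        have h3 := abs_le.1 h2
        have hρnn := hρ0 x
        nlinarith
      have hm := integral_mono hint1 hint2 hpt
      rw [integral_sub hpρ_int (hρ_int.const_mul _), integral_const_mul] at hm
      linarith
    rw [hsplit, htr]
    linarith
  -- FTC + Fubini: discrete difference as integral of ψ
  have key2 : ∀ h : ℝ, 0 < h →
      (∫ x, p x * (ρ (x + h • v) - ρ x)) = ∫ s in Set.Ioc 0 h, ψ s := by
    intro h hh
    set ν : Measure ℝ := volume.restrict (Set.Ioc (0:ℝ) h) with hν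
    haveI : IsFiniteMeasure ν := by
      constructor
      rw [hν, Measure.restrict_apply_univ]
      simp [Real.volume_Ioc]
    have hline : ∀ (x : E) (s : ℝ), HasDerivAt (fun t : ℝ => ρ (x + t • v)) (q (x + s • v)) s := by
      intro x s
      have hd : HasDerivAt (fun t : ℝ => x + t • v) v s := by
        simpa using ((hasDerivAt_id s).smul_const v).const_add x
      have hρd : HasFDerivAt ρ (fderiv ℝ ρ (x + s • v)) (x + s • v) :=
        ((hρ.differentiable one_ne_zero) (x + s • v)).hasFDerivAt
      have hcomp := hρd.comp_hasDerivAt s hd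
      rw [hq]; exact hcomp
    have hqline : ∀ x : E, Continuous fun s : ℝ => q (x + s • v) :=
      fun x => hqc.comp (continuous_const.add (continuous_id.smul continuous_const))
    have hFTC : ∀ x : E, ρ (x + h • v) - ρ x = ∫ s in Set.Ioc 0 h, q (x + s • v) := by
      intro x
      have hint := (hqline x).intervalIntegrable (μ := (volume : Measure ℝ)) 0 h
      have hI := intervalIntegral.integral_eq_sub_of_hasDerivAt
        (f := fun t : ℝ => ρ (x + t • v)) (f' := fun t : ℝ => q (x + t • v))
        (a := 0) (b := h) (fun t _ => hline x t) hint
      rw [intervalIntegral.integral_of_le hh.le] at hI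
      rw [hI]
      simp
    -- integrability of the two-variable integrand
    set G : ℝ × E → ℝ := Function.uncurry fun s x => p x * q (x + s • v) with hG
    have hGcont : Continuous G := by
      apply Continuous.mul
      · exact hp_cont.comp continuous_snd
      · exact hqc.comp (continuous_snd.add (continuous_fst.smul continuous_const))
    have hT : MeasurePreserving (fun z : ℝ × E => (z.1, z.2 + z.1 • v))
        (ν.prod volume) (ν.prod volume) := by
      refine MeasurePreserving.skew_product (g := fun a c => c + a • v)
        (MeasurePreserving.id ν) ?_ (Filter.Eventually.of_forall fun a => ?_)
      · exact (continuous_snd.add (continuous_fst.smul continuous_const)).measurable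
      · exact map_add_right_eq_self volume (a • v)
    set H : ℝ × E → ℝ := fun z => p (z.2 - z.1 • v) * q z.2 with hH
    have hHcont : Continuous H := by
      apply Continuous.mul
      · exact hp_cont.comp (continuous_snd.sub (continuous_fst.smul continuous_const))
      · exact hqc.comp continuous_snd
    have hM_int : Integrable (fun z : ℝ × E => |p z.2 * q z.2| + (L * h) * |q z.2|)
        (ν.prod volume) := by
      have hMc : Continuous fun y : E => |p y * q y| + (L * h) * |q y| :=
        ((hp_cont.mul hqc).abs).add (continuous_const.mul hqc.abs)
      refine (integrable_prod_iff ?_).2 ⟨?_, ?_⟩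
      · exact (hMc.comp continuous_snd).aestronglyMeasurable
      · exact Filter.Eventually.of_forall fun a =>
          (hpq_int.abs.add (habs_int.const_mul (L * h)))
      · refine (integrable_const (∫ y : E, ‖|p y * q y| + L * h * |q y|‖)).congr
          (Filter.Eventually.of_forall fun a => by simp)
    have hae1 : ∀ᵐ z : ℝ × E ∂(ν.prod volume), z.1 ∈ Set.Ioc 0 h := by
      rw [ae_iff]
      have hset : {z : ℝ × E | ¬ z.1 ∈ Set.Ioc 0 h} = {a : ℝ | ¬ a ∈ Set.Ioc 0 h} ×ˢ Set.univ := by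
        ext z; simp
      rw [hset, Measure.prod_prod]
      have : ν {a : ℝ | ¬ a ∈ Set.Ioc 0 h} = 0 := by
        rw [hν, Measure.restrict_apply']
        · simp [Set.inter_comm]
          convert measure_empty
          · ext a; simp
          · infer_instance
        · exact measurableSet_Ioc
      rw [this, zero_mul]
    have hH_int : Integrable H (ν.prod volume) := by
      refine hM_int.mono' hHcont.aestronglyMeasurable ?_
      filter_upwards [hae1] with z hz
      have h1 : |p (z.2 - z.1 • v)| ≤ |p z.2| + L * h := by
        have h2 := hpshift z.2 z.1
        have h3 : |z.1| ≤ h := by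
          rw [abs_of_pos hz.1]; exact hz.2
        nlinarith
      have hb : ‖H z‖ ≤ (|p z.2| + L * h) * |q z.2| := by
        rw [hH, Real.norm_eq_abs]
        simp only
        rw [abs_mul]
        exact mul_le_mul_of_nonneg_right h1 (abs_nonneg _)
      refine hb.trans ?_
      rw [abs_mul]
      ring_nf
      nlinarith [abs_nonneg (q z.2), abs_nonneg (p z.2)]
    have hG_int : Integrable G (ν.prod volume) := by
      have hGH : G = H ∘ fun z : ℝ × E => (z.1, z.2 + z.1 • v) := by
        funext z
        simp only [hG, hH, Function.uncurry, Function.comp]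
        congr 2
        module
      rw [hGH]
      exact (hT.integrable_comp hHcont.aestronglyMeasurable).2 hH_int
    have hswap := integral_integral_swap (μ := ν) (ν := (volume : Measure E))
      (f := fun s x => p x * q (x + s • v)) hG_int
    calc (∫ x, p x * (ρ (x + h • v) - ρ x))
        = ∫ x, ∫ s in Set.Ioc 0 h, p x * q (x + s • v) := by
          refine integral_congr_ae (Filter.Eventually.of_forall fun x => ?_)
          show p x * (ρ (x + h • v) - ρ x) = ∫ s in Set.Ioc 0 h, p x * q (x + s • v)
          rw [hFTC x, ← integral_const_mul]
      _ = ∫ s in Set.Ioc 0 h, ∫ x, p x * q (x + s • v) := hswap.symm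
      _ = ∫ s in Set.Ioc 0 h, ψ s := by
          refine integral_congr_ae (Filter.Eventually.of_forall fun s => ?_)
          exact translate_eq p q (s • v)
  -- combine
  have main : ∀ h : ℝ, 0 < h → -(L * ∫ x, ρ x) ≤ (∫ x, p x * q x) + L * Q * h / 2 := by
    intro h hh
    have h2 := key2 h hh
    have h3 := key3 h hh
    have hub : ∀ s ∈ Set.Ioc (0:ℝ) h, ψ s ≤ (∫ x, p x * q x) + L * Q * s := by
      intro s hs
      have := hψub s hs.1.le
      linarith [this]
    have h4 : (∫ s in Set.Ioc 0 h, ψ s)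
        ≤ h * (∫ x, p x * q x) + L * Q * (h ^ 2 / 2) := by
      have hψint : IntegrableOn ψ (Set.Ioc 0 h) :=
        hψcont.integrableOn_Icc.mono_set Set.Ioc_subset_Icc_self
      have hgint : IntegrableOn (fun s : ℝ => (∫ x, p x * q x) + L * Q * s) (Set.Ioc 0 h) := by
        refine Continuous.integrableOn_Icc ?_ |>.mono_set Set.Ioc_subset_Icc_self
        continuity
      have hmono := setIntegral_mono_on hψint hgint measurableSet_Ioc hub
      have hcomp : (∫ s in Set.Ioc 0 h, ((∫ x, p x * q x) + L * Q * s))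
          = h * (∫ x, p x * q x) + L * Q * (h ^ 2 / 2) := by
        rw [← intervalIntegral.integral_of_le hh.le]
        rw [intervalIntegral.integral_add (intervalIntegrable_const)
          ((intervalIntegral.intervalIntegrable_id).const_mul (L * Q))]
        rw [intervalIntegral.integral_const_mul, intervalIntegral.integral_const, integral_id]
        simp
      linarith [hmono, hcomp ▸ hmono]
    rw [h2] at h3
    have hρI : 0 ≤ ∫ x, ρ x := integral_nonneg hρ0
    nlinarith [h3, h4]
  have hfin : -(L * ∫ x, ρ x) ≤ ∫ x, p x * q x := by
    refine le_of_forall_pos_le_add fun ε hε => ?_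
    have hLQ : (0:ℝ) ≤ L * Q := mul_nonneg hL hQ0
    have hh : (0:ℝ) < 2 * ε / (L * Q + 1) := by positivity
    have := main _ hh
    have hbound : L * Q * (2 * ε / (L * Q + 1)) / 2 ≤ ε := by
      have h2 : L * Q / (L * Q + 1) ≤ 1 := by
        rw [div_le_one (by linarith)]; linarith
      have h1 : L * Q * (2 * ε / (L * Q + 1)) / 2 = (L * Q / (L * Q + 1)) * ε := by
        field_simp
      rw [h1]
      nlinarith
    linarith
  exact hfin

end SecondMomentAux

open SecondMomentAux

/-- If `∇F` is `L`-Lipschitz, `π ∝ exp (-F)` and `μ` is a probability measure with smooth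
positive density `r = dμ/dπ` w.r.t. `π` having finite relative Fisher information, then
`∫ ‖∇F‖² dμ ≤ ∫ ‖∇ log (dμ/dπ)‖² dμ + 2 d L`. -/
theorem second_moment_of_gradient_le_fisher
    {d : ℕ} (F : EuclideanSpace ℝ (Fin d) → ℝ) (L : ℝ) (hL : 0 < L)
    (hFdiff : Differentiable ℝ F)
    (hlip : ∀ x y, ‖gradient F x - gradient F y‖ ≤ L * ‖x - y‖)
    (pi mu : Measure (EuclideanSpace ℝ (Fin d)))
    [IsProbabilityMeasure pi] [IsProbabilityMeasure mu]
    (Z : ℝ) (hZ : 0 < Z)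
    (hpi : pi = (ENNReal.ofReal Z)⁻¹ • (volume.withDensity fun x => ENNReal.ofReal (exp (-F x))))
    (r : EuclideanSpace ℝ (Fin d) → ℝ)
    (hr_pos : ∀ x, 0 < r x) (hr_smooth : ContDiff ℝ (⊤ : ℕ∞) r)
    (hmu : mu = pi.withDensity fun x => ENNReal.ofReal (r x))
    (hFisher : Integrable (fun x => ‖gradient (fun y => log (r y)) x‖ ^ 2) mu) :
    ∫ x, ‖gradient F x‖ ^ 2 ∂mu
      ≤ (∫ x, ‖gradient (fun y => log (r y)) x‖ ^ 2 ∂mu) + 2 * d * L := by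
  classical
  set G : EuclideanSpace ℝ (Fin d) → EuclideanSpace ℝ (Fin d) := gradient F with hG
  set sf : EuclideanSpace ℝ (Fin d) → EuclideanSpace ℝ (Fin d) :=
    gradient (fun y => log (r y)) with hsf
  have hGcont : Continuous G := by
    refine LipschitzWith.continuous (K := L.toNNReal) ?_
    refine LipschitzWith.of_dist_le_mul fun x y => ?_
    rw [dist_eq_norm, dist_eq_norm, Real.coe_toNNReal _ hL.le]
    exact hlip x y
  have hF1 : ContDiff ℝ 1 F := by
    rw [contDiff_one_iff_fderiv]
    refine ⟨hFdiff, ?_⟩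
    have : (fderiv ℝ F) = fun x => (InnerProductSpace.toDual ℝ _) (G x) := by
      funext x
      have h1 := (hFdiff x).hasGradientAt.hasFDerivAt
      exact h1.fderiv
    rw [this]
    exact (InnerProductSpace.toDual ℝ _).continuous.comp hGcont
  have hfderivF : ∀ x v, fderiv ℝ F x v = inner ℝ (G x) v := by
    intro x v
    rw [(hFdiff x).hasGradientAt.hasFDerivAt.fderiv]
    exact InnerProductSpace.toDual_apply_apply
  have hrd : Differentiable ℝ r := hr_smooth.differentiable (by simp)
  have hlogd : ∀ x, HasFDerivAt (fun y => log (r y)) ((r x)⁻¹ • fderiv ℝ r x) x := by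
    intro x
    exact (hrd x).hasFDerivAt.log (ne_of_gt (hr_pos x))
  have hfderivlog : ∀ x v, inner ℝ (sf x) v = (r x)⁻¹ * fderiv ℝ r x v := by
    intro x v
    have h1 : sf x = (InnerProductSpace.toDual ℝ _).symm ((r x)⁻¹ • fderiv ℝ r x) := by
      rw [hsf]
      exact (hlogd x).hasGradientAt.gradient
    rw [h1, InnerProductSpace.toDual_symm_apply]
    simp
  have hsfcont : Continuous sf := by
    have h1 : sf = fun x => (InnerProductSpace.toDual ℝ _).symm ((r x)⁻¹ • fderiv ℝ r x) := by
      funext x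
      rw [hsf]
      exact (hlogd x).hasGradientAt.gradient
    rw [h1]
    refine (InnerProductSpace.toDual ℝ _).symm.continuous.comp ?_
    exact ((hr_smooth.continuous.inv₀ fun x => ne_of_gt (hr_pos x))).smul
      (hr_smooth.continuous_fderiv (by simp))
  -- the Lebesgue density of mu
  set ρ : EuclideanSpace ℝ (Fin d) → ℝ := fun x => Z⁻¹ * (exp (-F x) * r x) with hρdef
  have hρpos : ∀ x, 0 < ρ x := fun x =>
    mul_pos (inv_pos.2 hZ) (mul_pos (exp_pos _) (hr_pos x))
  have hρ0 : ∀ x, 0 ≤ ρ x := fun x => (hρpos x).le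
  have hρc1 : ContDiff ℝ 1 ρ :=
    contDiff_const.mul (((hF1.neg).exp).mul (hr_smooth.of_le (by simp)))
  have hρc : Continuous ρ := hρc1.continuous
  have hmu' : mu = volume.withDensity fun x => ENNReal.ofReal (ρ x) := by
    have hmeas_e : Measurable fun x => ENNReal.ofReal (exp (-F x)) :=
      (measurable_exp.comp hF1.continuous.measurable.neg).ennreal_ofReal
    have hmeas_r : Measurable fun x => ENNReal.ofReal (r x) :=
      hr_smooth.continuous.measurable.ennreal_ofReal
    have hZne : (ENNReal.ofReal Z)⁻¹ ≠ ⊤ := by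
      rw [ENNReal.inv_ne_top]
      simpa [ENNReal.ofReal_eq_zero] using hZ
    rw [hmu, hpi, withDensity_smul_measure, ← withDensity_mul _ hmeas_e hmeas_r]
    rw [← withDensity_smul' _ _ hZne]
    congr 1
    funext x
    simp only [Pi.smul_apply, Pi.mul_apply, smul_eq_mul]
    show (ENNReal.ofReal Z)⁻¹ * (ENNReal.ofReal (exp (-F x)) * ENNReal.ofReal (r x))
        = ENNReal.ofReal (Z⁻¹ * (exp (-F x) * r x))
    rw [ENNReal.ofReal_mul (inv_nonneg.2 hZ.le), ENNReal.ofReal_mul (exp_nonneg _),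
      ENNReal.ofReal_inv_of_pos hZ]
  have hnn_meas : Measurable fun x => (ρ x).toNNReal := hρc.measurable.real_toNNReal
  have hofreal : (fun x => ENNReal.ofReal (ρ x)) = fun x => ((ρ x).toNNReal : ℝ≥0∞) := rfl
  have htransfer : ∀ g : EuclideanSpace ℝ (Fin d) → ℝ,
      ∫ x, g x ∂mu = ∫ x, ρ x * g x := by
    intro g
    rw [hmu', hofreal, integral_withDensity_eq_integral_smul hnn_meas]
    congr 1
    funext x
    simp [NNReal.smul_def, Real.coe_toNNReal _ (hρ0 x)]
  have htransfer_int : ∀ g : EuclideanSpace ℝ (Fin d) → ℝ,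
      Integrable g mu ↔ Integrable (fun x => ρ x * g x) volume := by
    intro g
    rw [hmu', hofreal, integrable_withDensity_iff_integrable_smul hnn_meas]
    constructor <;> intro hh <;>
      refine hh.congr (Filter.Eventually.of_forall fun x => ?_) <;>
      simp [NNReal.smul_def, Real.coe_toNNReal _ (hρ0 x)]
  have hρ1 : (∫ x, ρ x) = 1 := by
    have h2 := htransfer (fun _ => (1:ℝ))
    simp at h2
    rw [← h2]
  have hρ_int : Integrable ρ := by
    have := (htransfer_int (fun _ => (1:ℝ))).1 (integrable_const 1)
    simpa using this
  by_cases hI : Integrable (fun x => ‖G x‖ ^ 2) mu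
  swap
  · rw [integral_undef hI]
    have h1 : 0 ≤ ∫ x, ‖sf x‖ ^ 2 ∂mu := integral_nonneg fun x => by positivity
    have h2 : (0:ℝ) ≤ 2 * d * L := by positivity
    linarith
  have IG2 : Integrable (fun x => ρ x * ‖G x‖ ^ 2) := (htransfer_int _).1 hI
  have IS2 : Integrable (fun x => ρ x * ‖sf x‖ ^ 2) := (htransfer_int _).1 hFisher
  have IρG : Integrable (fun x => ρ x * ‖G x‖) := by
    refine Integrable.mono' (hρ_int.add IG2)
      ((hρc.mul hGcont.norm).aestronglyMeasurable) (Filter.Eventually.of_forall fun x => ?_)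
    have h1 : ‖G x‖ ≤ 1 + ‖G x‖ ^ 2 := by nlinarith [norm_nonneg (G x)]
    have h2 := hρ0 x
    simp only [Pi.add_apply]
    rw [Real.norm_eq_abs, abs_of_nonneg (by positivity)]
    nlinarith
  have IρS : Integrable (fun x => ρ x * ‖sf x‖) := by
    refine Integrable.mono' (hρ_int.add IS2)
      ((hρc.mul hsfcont.norm).aestronglyMeasurable) (Filter.Eventually.of_forall fun x => ?_)
    have h1 : ‖sf x‖ ≤ 1 + ‖sf x‖ ^ 2 := by nlinarith [norm_nonneg (sf x)]
    have h2 := hρ0 x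
    simp only [Pi.add_apply]
    rw [Real.norm_eq_abs, abs_of_nonneg (by positivity)]
    nlinarith
  have IρGS : Integrable (fun x => ρ x * (‖G x‖ * ‖sf x‖)) := by
    refine Integrable.mono' (IG2.add IS2)
      ((hρc.mul (hGcont.norm.mul hsfcont.norm)).aestronglyMeasurable)
      (Filter.Eventually.of_forall fun x => ?_)
    have h2 := hρ0 x
    simp only [Pi.add_apply]
    rw [Real.norm_eq_abs, abs_of_nonneg (by positivity)]
    nlinarith [norm_nonneg (G x), norm_nonneg (sf x), sq_nonneg (‖G x‖ - ‖sf x‖)]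
  -- derivative formula for ρ
  have hqform : ∀ x v, fderiv ℝ ρ x v = ρ x * ((inner ℝ (sf x) v : ℝ) - inner ℝ (G x) v) := by
    intro x v
    have hFd : HasFDerivAt (fun y => -F y) (-(fderiv ℝ F x)) x := (hFdiff x).hasFDerivAt.neg
    have he : HasFDerivAt (fun y => exp (-F y)) (exp (-F x) • -(fderiv ℝ F x)) x := hFd.exp
    have hr' : HasFDerivAt r (fderiv ℝ r x) x := (hrd x).hasFDerivAt
    have hm : HasFDerivAt (fun y => exp (-F y) * r y)
        (exp (-F x) • fderiv ℝ r x + r x • (exp (-F x) • -(fderiv ℝ F x))) x := he.mul hr'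
    have hρd : HasFDerivAt ρ
        (Z⁻¹ • (exp (-F x) • fderiv ℝ r x + r x • (exp (-F x) • -(fderiv ℝ F x)))) x :=
      hm.const_mul Z⁻¹
    rw [hρd.fderiv]
    have hB : fderiv ℝ r x v = r x * (inner ℝ (sf x) v : ℝ) := by
      rw [hfderivlog x v, ← mul_assoc, mul_inv_cancel₀ (ne_of_gt (hr_pos x)), one_mul]
    simp only [ContinuousLinearMap.coe_smul', Pi.smul_apply, ContinuousLinearMap.add_apply,
      ContinuousLinearMap.neg_apply, smul_eq_mul]
    rw [hB, hfderivF, hρdef]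
    ring
  -- apply the directional integration by parts to each coordinate
  have hpq_int_i : ∀ i : Fin d, Integrable (fun x =>
      (inner ℝ (G x) (EuclideanSpace.single i (1:ℝ)) : ℝ)
        * fderiv ℝ ρ x (EuclideanSpace.single i (1:ℝ))) := by
    intro i
    have hcont : Continuous fun x => (inner ℝ (G x) (EuclideanSpace.single i (1:ℝ)) : ℝ) :=
      hGcont.inner continuous_const
    have hqcont : Continuous fun x => fderiv ℝ ρ x (EuclideanSpace.single i (1:ℝ)) :=
      (hρc1.continuous_fderiv one_ne_zero).clm_apply continuous_const
    refine Integrable.mono' (IρGS.add IG2) (hcont.mul hqcont).aestronglyMeasurable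
      (Filter.Eventually.of_forall fun x => ?_)
    have h2 := hρ0 x
    have h3 : |(inner ℝ (G x) (EuclideanSpace.single i (1:ℝ)) : ℝ)| ≤ ‖G x‖ := by
      have := abs_real_inner_le_norm (G x) (EuclideanSpace.single i (1:ℝ))
      simpa using this
    have h4 : |(inner ℝ (sf x) (EuclideanSpace.single i (1:ℝ)) : ℝ)| ≤ ‖sf x‖ := by
      have := abs_real_inner_le_norm (sf x) (EuclideanSpace.single i (1:ℝ))
      simpa using this
    rw [Real.norm_eq_abs, abs_mul, hqform, abs_mul, abs_of_nonneg h2]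
    have h5 : |(inner ℝ (sf x) (EuclideanSpace.single i (1:ℝ)) : ℝ)
        - inner ℝ (G x) (EuclideanSpace.single i (1:ℝ))| ≤ ‖sf x‖ + ‖G x‖ := by
      calc |(inner ℝ (sf x) (EuclideanSpace.single i (1:ℝ)) : ℝ)
          - inner ℝ (G x) (EuclideanSpace.single i (1:ℝ))|
          ≤ |(inner ℝ (sf x) (EuclideanSpace.single i (1:ℝ)) : ℝ)|
            + |(inner ℝ (G x) (EuclideanSpace.single i (1:ℝ)) : ℝ)| := abs_sub _ _
        _ ≤ ‖sf x‖ + ‖G x‖ := add_le_add h4 h3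
    have h6 := abs_nonneg ((inner ℝ (G x) (EuclideanSpace.single i (1:ℝ)) : ℝ))
    simp only [Pi.add_apply]
    nlinarith [norm_nonneg (G x), norm_nonneg (sf x),
      mul_le_mul_of_nonneg_left (mul_le_mul h3 h5 (abs_nonneg _) (norm_nonneg (G x))) h2]
  have hDi : ∀ i : Fin d, -(L * ∫ x, ρ x) ≤
      ∫ x, (inner ℝ (G x) (EuclideanSpace.single i (1:ℝ)) : ℝ)
        * fderiv ℝ ρ x (EuclideanSpace.single i (1:ℝ)) := by
    intro i
    refine dir_ibp hL.le _ ρ _ (EuclideanSpace.single i (1:ℝ))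
      (hGcont.inner continuous_const) ?_ hρc1 hρ0 (fun x => rfl) hρ_int ?_ ?_ (hpq_int_i i)
    · intro x t
      have h1 : (inner ℝ (G (x + t • EuclideanSpace.single i (1:ℝ)))
            (EuclideanSpace.single i (1:ℝ)) : ℝ) - inner ℝ (G x) (EuclideanSpace.single i (1:ℝ))
          = inner ℝ (G (x + t • EuclideanSpace.single i (1:ℝ)) - G x)
              (EuclideanSpace.single i (1:ℝ)) := by
        rw [inner_sub_left]
      rw [h1]
      have h2 := abs_real_inner_le_norm
        (G (x + t • EuclideanSpace.single i (1:ℝ)) - G x) (EuclideanSpace.single i (1:ℝ))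
      have h3 := hlip (x + t • EuclideanSpace.single i (1:ℝ)) x
      have h4 : ‖x + t • EuclideanSpace.single i (1:ℝ) - x‖ = |t| := by
        simp [norm_smul]
      rw [h4] at h3
      have h5 : ‖(EuclideanSpace.single i (1:ℝ))‖ = 1 := by simp
      rw [h5, mul_one] at h2
      linarith
    · -- p * ρ integrable
      refine Integrable.mono' IρG
        ((hGcont.inner continuous_const).mul hρc).aestronglyMeasurable
        (Filter.Eventually.of_forall fun x => ?_)
      have h3 : |(inner ℝ (G x) (EuclideanSpace.single i (1:ℝ)) : ℝ)| ≤ ‖G x‖ := by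
        have := abs_real_inner_le_norm (G x) (EuclideanSpace.single i (1:ℝ))
        simpa using this
      have h2 := hρ0 x
      rw [Real.norm_eq_abs, abs_mul, abs_of_nonneg h2]
      nlinarith [norm_nonneg (G x)]
    · -- q integrable
      refine Integrable.mono' (IρS.add IρG)
        (((hρc1.continuous_fderiv one_ne_zero).clm_apply continuous_const)).aestronglyMeasurable
        (Filter.Eventually.of_forall fun x => ?_)
      have h2 := hρ0 x
      have h3 : |(inner ℝ (G x) (EuclideanSpace.single i (1:ℝ)) : ℝ)| ≤ ‖G x‖ := by
        have := abs_real_inner_le_norm (G x) (EuclideanSpace.single i (1:ℝ))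
        simpa using this
      have h4 : |(inner ℝ (sf x) (EuclideanSpace.single i (1:ℝ)) : ℝ)| ≤ ‖sf x‖ := by
        have := abs_real_inner_le_norm (sf x) (EuclideanSpace.single i (1:ℝ))
        simpa using this
      rw [Real.norm_eq_abs, hqform, abs_mul, abs_of_nonneg h2]
      have h5 : |(inner ℝ (sf x) (EuclideanSpace.single i (1:ℝ)) : ℝ)
          - inner ℝ (G x) (EuclideanSpace.single i (1:ℝ))| ≤ ‖sf x‖ + ‖G x‖ := by
        calc |(inner ℝ (sf x) (EuclideanSpace.single i (1:ℝ)) : ℝ)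
            - inner ℝ (G x) (EuclideanSpace.single i (1:ℝ))|
            ≤ |(inner ℝ (sf x) (EuclideanSpace.single i (1:ℝ)) : ℝ)|
              + |(inner ℝ (G x) (EuclideanSpace.single i (1:ℝ)) : ℝ)| := abs_sub _ _
          _ ≤ ‖sf x‖ + ‖G x‖ := add_le_add h4 h3
      simp only [Pi.add_apply]
      nlinarith [norm_nonneg (G x), norm_nonneg (sf x)]
  -- sum over coordinates
  have IρinnerGS : Integrable (fun x => ρ x * (inner ℝ (G x) (sf x) : ℝ)) := by
    refine Integrable.mono' IρGS
      ((hρc.mul (hGcont.inner hsfcont)).aestronglyMeasurable)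
      (Filter.Eventually.of_forall fun x => ?_)
    have h2 := hρ0 x
    have h3 := abs_real_inner_le_norm (G x) (sf x)
    rw [Real.norm_eq_abs, abs_mul, abs_of_nonneg h2]
    nlinarith [norm_nonneg (G x), norm_nonneg (sf x), abs_nonneg ((inner ℝ (G x) (sf x) : ℝ))]
  have hsum : ∀ x, (∑ i : Fin d, (inner ℝ (G x) (EuclideanSpace.single i (1:ℝ)) : ℝ)
        * fderiv ℝ ρ x (EuclideanSpace.single i (1:ℝ)))
      = ρ x * (inner ℝ (G x) (sf x) : ℝ) - ρ x * ‖G x‖ ^ 2 := by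
    intro x
    have h1 : (inner ℝ (G x) (sf x) : ℝ) = ∑ i, G x i * sf x i := by
      rw [PiLp.inner_apply]; norm_num; exact Finset.sum_congr rfl fun i _ => mul_comm _ _
    have h2 : ‖G x‖ ^ 2 = ∑ i, G x i * G x i := by
      rw [← real_inner_self_eq_norm_sq, PiLp.inner_apply]; norm_num; exact Finset.sum_congr rfl fun i _ => sq _
    have h3 : ∀ i : Fin d, (inner ℝ (G x) (EuclideanSpace.single i (1:ℝ)) : ℝ)
          * fderiv ℝ ρ x (EuclideanSpace.single i (1:ℝ))
        = ρ x * (G x i * sf x i) - ρ x * (G x i * G x i) := by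
      intro i
      rw [hqform]
      have e1 : (inner ℝ (G x) (EuclideanSpace.single i (1:ℝ)) : ℝ) = G x i := by rw [EuclideanSpace.inner_single_right]; simp
      have e2 : (inner ℝ (sf x) (EuclideanSpace.single i (1:ℝ)) : ℝ) = sf x i := by rw [EuclideanSpace.inner_single_right]; simp
      rw [e1, e2]
      ring
    rw [Finset.sum_congr rfl fun i _ => h3 i]
    rw [h1, h2, Finset.mul_sum, Finset.mul_sum, ← Finset.sum_sub_distrib]
  have hsumineq : -((d:ℝ) * L) ≤ (∫ x, ρ x * (inner ℝ (G x) (sf x) : ℝ))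
      - ∫ x, ρ x * ‖G x‖ ^ 2 := by
    have h1 : (∑ _i : Fin d, -(L * ∫ x, ρ x)) ≤ ∑ i : Fin d, ∫ x,
        (inner ℝ (G x) (EuclideanSpace.single i (1:ℝ)) : ℝ)
          * fderiv ℝ ρ x (EuclideanSpace.single i (1:ℝ)) :=
      Finset.sum_le_sum fun i _ => hDi i
    rw [← integral_finset_sum _ (fun i _ => hpq_int_i i)] at h1
    have h2 : (∫ x, ∑ i : Fin d, (inner ℝ (G x) (EuclideanSpace.single i (1:ℝ)) : ℝ)
          * fderiv ℝ ρ x (EuclideanSpace.single i (1:ℝ)))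
        = (∫ x, ρ x * (inner ℝ (G x) (sf x) : ℝ)) - ∫ x, ρ x * ‖G x‖ ^ 2 := by
      rw [integral_congr_ae (Filter.Eventually.of_forall hsum)]
      exact integral_sub IρinnerGS IG2
    rw [h2] at h1
    have h3 : (∑ _i : Fin d, -(L * ∫ x, ρ x)) = -((d:ℝ) * L) := by
      rw [hρ1]
      simp [Finset.sum_const, Finset.card_univ, mul_comm]
    rw [h3] at h1
    exact h1
  have hCS : (∫ x, ρ x * (inner ℝ (G x) (sf x) : ℝ))
      ≤ ((∫ x, ρ x * ‖G x‖ ^ 2) + ∫ x, ρ x * ‖sf x‖ ^ 2) / 2 := by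
    have hpt : ∀ x, ρ x * (inner ℝ (G x) (sf x) : ℝ)
        ≤ (ρ x * ‖G x‖ ^ 2 + ρ x * ‖sf x‖ ^ 2) / 2 := by
      intro x
      have h2 := hρ0 x
      have h3 := real_inner_le_norm (G x) (sf x)
      nlinarith [sq_nonneg (‖G x‖ - ‖sf x‖), norm_nonneg (G x), norm_nonneg (sf x)]
    have h7 := integral_mono IρinnerGS ((IG2.add IS2).div_const 2) hpt
    rw [integral_div] at h7
    simp only [Pi.add_apply] at h7
    rw [integral_add IG2 IS2] at h7
    exact h7
  rw [htransfer (fun x => ‖G x‖ ^ 2), htransfer (fun x => ‖sf x‖ ^ 2)]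
  linarith [hsumineq, hCS]
end

section
/- Fix 0 < p ≤ 1, L > 0, α ≥ 0, β ≥ 1, h > 0. Define C = (8L²h²β + 2β)/(1 - (1-p)(4L²h²α + 1)β). If β = 1 and h ≤ (1/(10L))√(p/(1+α)), then C ≥ 0 and 8h²(2L² + C(1-p)L²α) ≤ 1/4. -/
/-!
Put `s = L²h²`. The step-size condition says exactly `100 s (1 + α) ≤ p`, so `4 s α ≤ p / 25`
and the denominator of `C` is at least `24p/25 > 0`; this gives `C ≥ 0` and
`C ≤ 25 (8s + 2) / (24p)`. After this substitution the claim is a polynomial inequality in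
`s`, `s α` and `p`, which follows from `100 s α ≤ p - 100 s` and `p ≤ 1`.
-/

noncomputable def marinaLyapunovConst (p L h α β : ℝ) : ℝ :=
  (8 * L ^ 2 * h ^ 2 * β + 2 * β) / (1 - (1 - p) * (4 * L ^ 2 * h ^ 2 * α + 1) * β)

lemma sq_mul_le_of_le_one_div_mul_sqrt {c h x : ℝ} (hc : 0 < c) (hh : 0 < h)
    (H : h ≤ 1 / c * √x) : (c * h) ^ 2 ≤ x := by
  rw [← Real.le_sqrt' (by positivity)]
  calc c * h ≤ c * (1 / c * √x) := by gcongr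
    _ = √x := by field_simp

lemma hundred_mul_sq_mul_le_of_step_le {p L α h : ℝ} (hL : 0 < L) (hα : 0 ≤ α) (hh : 0 < h)
    (hstep : h ≤ 1 / (10 * L) * √(p / (1 + α))) : 100 * (L ^ 2 * h ^ 2) * (1 + α) ≤ p := by
  have key := sq_mul_le_of_le_one_div_mul_sqrt (by positivity) hh hstep
  rw [le_div_iff₀ (by positivity)] at key
  linarith

section BetaOne

variable {p L h α : ℝ}

lemma marinaLyapunovConst_one_denom_ge (hα : 0 ≤ α)
    (hs : 100 * (L ^ 2 * h ^ 2) * (1 + α) ≤ p) :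
    24 / 25 * p ≤ 1 - (1 - p) * (4 * L ^ 2 * h ^ 2 * α + 1) * 1 := by
  have hp0 : 0 ≤ p := le_trans (by positivity) hs
  have hsα : 0 ≤ L ^ 2 * h ^ 2 * α := by positivity
  nlinarith [mul_nonneg hp0 hsα]

lemma marinaLyapunovConst_one_nonneg (hp : 0 < p) (hα : 0 ≤ α)
    (hs : 100 * (L ^ 2 * h ^ 2) * (1 + α) ≤ p) : 0 ≤ marinaLyapunovConst p L h α 1 :=
  div_nonneg (by positivity) (by linarith [marinaLyapunovConst_one_denom_ge hα hs])

lemma marinaLyapunovConst_one_le (hp : 0 < p) (hα : 0 ≤ α)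
    (hs : 100 * (L ^ 2 * h ^ 2) * (1 + α) ≤ p) :
    marinaLyapunovConst p L h α 1 ≤ 25 * (8 * (L ^ 2 * h ^ 2) + 2) / (24 * p) := by
  calc marinaLyapunovConst p L h α 1
      ≤ (8 * (L ^ 2 * h ^ 2) + 2) / (24 / 25 * p) := by
        unfold marinaLyapunovConst
        rw [show 8 * L ^ 2 * h ^ 2 * 1 + 2 * 1 = 8 * (L ^ 2 * h ^ 2) + 2 by ring]
        exact div_le_div_of_nonneg_left (by positivity) (by positivity)
          (marinaLyapunovConst_one_denom_ge hα hs)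
    _ = 25 * (8 * (L ^ 2 * h ^ 2) + 2) / (24 * p) := by field_simp

end BetaOne

lemma sixteen_mul_add_le_quarter {p s b : ℝ} (hp : 0 < p) (hp1 : p ≤ 1) (hs : 0 ≤ s)
    (hsb : 100 * (s + b) ≤ p) :
    16 * s + 8 * (25 * (8 * s + 2) / (24 * p)) * b ≤ 1 / 4 := by
  have hexp : 8 * (25 * (8 * s + 2) / (24 * p)) * b = 25 * (8 * s + 2) * b / (3 * p) := by
    field_simp; ring
  rw [hexp, ← le_sub_iff_add_le', div_le_iff₀ (by positivity)]
  nlinarith [mul_le_mul_of_nonneg_left (by linarith : 100 * b ≤ p - 100 * s)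
    (by positivity : 0 ≤ 8 * s + 2), mul_le_mul_of_nonneg_left hp1 hs]

/-- Step-size condition for the MARINA Lyapunov constant with `β = 1`: if
`h ≤ (1/(10L))√(p/(1+α))` then `C ≥ 0` and `8h²(2L² + C(1-p)L²α) ≤ 1/4`, where
`C = (8L²h²β + 2β)/(1 - (1-p)(4L²h²α + 1)β)`. -/
theorem marina_stepsize_beta_one
    (p L α h : ℝ) (hp : 0 < p) (hp1 : p ≤ 1) (hL : 0 < L) (hα : 0 ≤ α) (hh : 0 < h)
    (hstep : h ≤ (1 / (10 * L)) * Real.sqrt (p / (1 + α))) :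
    0 ≤ (8 * L ^ 2 * h ^ 2 * 1 + 2 * 1) / (1 - (1 - p) * (4 * L ^ 2 * h ^ 2 * α + 1) * 1) ∧
    8 * h ^ 2 * (2 * L ^ 2 +
        ((8 * L ^ 2 * h ^ 2 * 1 + 2 * 1) / (1 - (1 - p) * (4 * L ^ 2 * h ^ 2 * α + 1) * 1))
          * (1 - p) * L ^ 2 * α) ≤ 1 / 4 := by
  have hs := hundred_mul_sq_mul_le_of_step_le hL hα hh hstep
  have hC0 := marinaLyapunovConst_one_nonneg hp hα hs
  refine ⟨hC0, ?_⟩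
  set C := marinaLyapunovConst p L h α 1
  have hC : C * (1 - p) ≤ 25 * (8 * (L ^ 2 * h ^ 2) + 2) / (24 * p) :=
    calc C * (1 - p) ≤ C := mul_le_of_le_one_right hC0 (by linarith)
      _ ≤ _ := marinaLyapunovConst_one_le hp hα hs
  calc 8 * h ^ 2 * (2 * L ^ 2 + C * (1 - p) * L ^ 2 * α)
      = 16 * (L ^ 2 * h ^ 2) + 8 * (C * (1 - p)) * (L ^ 2 * h ^ 2 * α) := by ring
    _ ≤ 16 * (L ^ 2 * h ^ 2) + 8 * (25 * (8 * (L ^ 2 * h ^ 2) + 2) / (24 * p)) *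
          (L ^ 2 * h ^ 2 * α) := by gcongr
    _ ≤ 1 / 4 :=
      sixteen_mul_add_le_quarter hp hp1 (by positivity) (by linarith)
end
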